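/- arXiv:1503.01728 — 2 statements merged into one kernel-verified Lean document; each statement's English description precedes it below -/
import Mathlib

section
/- Let M ∈ ℝ^{3×3} and let c ∈ (0, 1) satisfy c·|M|² ≤ (1 − c)². Then for all φ̃ ∈ ℝ and all F̃ ∈ ℝ^{3×3}: |φ̃|² + |sym F̃ + φ̃·M|² ≥ c(|φ̃|² + |sym F̃|²). -/
/-!
Put `x = |φ̃|`, `s = |sym F̃|`, `m = |M|`. By the reverse triangle inequality
`|sym F̃ + φ̃ M| ≥ |s - x m|`, so it suffices that the quadratic form
`x² + (s - x m)² - c (x² + s²)` is nonnegative. Multiplied by `1 - c > 0` it equals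
`((1 - c) s - x m)² + x² ((1 - c)² - c m²)`, and the hypothesis `c m² ≤ (1 - c)²` is exactly
the nonnegativity of the second square's coefficient.
-/

noncomputable section

attribute [local instance]
  Matrix.frobeniusSeminormedAddCommGroup
  Matrix.frobeniusNormedAddCommGroup
  Matrix.frobeniusNormedSpace

/-- The `3 × 3` real matrices, equipped (locally) with the Frobenius norm. -/
abbrev M3 : Type := Matrix (Fin 3) (Fin 3) ℝ

/-- The symmetric part `sym F = ½ (F + Fᵀ)`. -/
def symPart (F : M3) : M3 := (2⁻¹ : ℝ) • (F + F.transpose)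

theorem mul_sq_add_sq_le_sq_add_sub_mul_sq {c m : ℝ} (hc1 : c < 1)
    (hcm : c * m ^ 2 ≤ (1 - c) ^ 2) (x s : ℝ) :
    c * (x ^ 2 + s ^ 2) ≤ x ^ 2 + (s - x * m) ^ 2 := by
  have hc : 0 < 1 - c := sub_pos.2 hc1
  have hsos : (1 - c) * (x ^ 2 + (s - x * m) ^ 2 - c * (x ^ 2 + s ^ 2)) =
      ((1 - c) * s - x * m) ^ 2 + x ^ 2 * ((1 - c) ^ 2 - c * m ^ 2) := by
    ring
  have hnonneg : 0 ≤ (1 - c) * (x ^ 2 + (s - x * m) ^ 2 - c * (x ^ 2 + s ^ 2)) := by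
    rw [hsos]
    have := sub_nonneg.2 hcm
    positivity
  linarith [(mul_nonneg_iff_of_pos_left hc).1 hnonneg]

theorem mul_sq_add_sq_norm_le_sq_add_norm_add_smul_sq {E : Type*} [SeminormedAddCommGroup E]
    [NormedSpace ℝ E] {c : ℝ} {M : E} (hc1 : c < 1) (hcM : c * ‖M‖ ^ 2 ≤ (1 - c) ^ 2)
    (φ : ℝ) (S : E) :
    c * (|φ| ^ 2 + ‖S‖ ^ 2) ≤ |φ| ^ 2 + ‖S + φ • M‖ ^ 2 := by
  have hrev : |‖S‖ - |φ| * ‖M‖| ≤ ‖S + φ • M‖ := by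
    simpa [norm_smul] using abs_norm_sub_norm_le S (-(φ • M))
  calc c * (|φ| ^ 2 + ‖S‖ ^ 2)
      ≤ |φ| ^ 2 + (‖S‖ - |φ| * ‖M‖) ^ 2 := mul_sq_add_sq_le_sq_add_sub_mul_sq hc1 hcM _ _
    _ ≤ |φ| ^ 2 + ‖S + φ • M‖ ^ 2 :=
      add_le_add_right (sq_le_sq' (abs_le.1 hrev).1 (abs_le.1 hrev).2) _

theorem statement6_general (M : M3) (c : ℝ) (hc1 : c < 1)
    (hcM : c * ‖M‖ ^ 2 ≤ (1 - c) ^ 2) :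
    ∀ (φ' : ℝ) (F' : M3),
      |φ'| ^ 2 + ‖symPart F' + φ' • M‖ ^ 2 ≥ c * (|φ'| ^ 2 + ‖symPart F'‖ ^ 2) :=
  fun φ' F' => mul_sq_add_sq_norm_le_sq_add_norm_add_smul_sq hc1 hcM φ' (symPart F')

theorem statement6 (M : M3) (c : ℝ) (hc0 : 0 < c) (hc1 : c < 1)
    (hcM : c * ‖M‖ ^ 2 ≤ (1 - c) ^ 2) :
    ∀ (φ' : ℝ) (F' : M3),
      |φ'| ^ 2 + ‖symPart F' + φ' • M‖ ^ 2 ≥ c * (|φ'| ^ 2 + ‖symPart F'‖ ^ 2) :=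
  statement6_general M c hc1 hcM
end
end

section
/- For every F̃ ∈ ℝ^{3×3}, the quotient dist(Id + t·F̃, SO(3)) / t converges to |sym F̃| as t → 0⁺, i.e. lim_{t→0, t>0} (1/t)·inf_{R ∈ SO(3)} |Id + t·F̃ − R| = |sym F̃|. -/
noncomputable section

attribute [local instance]
  Matrix.frobeniusSeminormedAddCommGroup
  Matrix.frobeniusNormedAddCommGroup
  Matrix.frobeniusNormedSpace

/-- The special orthogonal group `SO(3)` as a subset of the `3 × 3` matrices. -/
def SO3 : Set M3 := {R : M3 | R.transpose * R = 1 ∧ R.det = 1}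

/-!
Writing `F = sym F + W` with `W` skew, the rotation `exp (t W)` gives
`dist (Id + t F, SO(3)) ≤ t |sym F| + o(t)`. Conversely, for `R ∈ SO(3)` the matrix `A = Id - R`
satisfies `sym A = ½ AᵀA`, so `|Id + t F - R| ≥ |sym (t F + A)| ≥ t |sym F| - ½ |A|²`; this is
`t |sym F| - O(t²)` when `|A| ≤ 2 t |F|`, and otherwise `|t F + A| ≥ |A| - t |F| ≥ t |F|` anyway.
-/

open NormedSpace Filter Topology Metric

theorem NormedSpace.exp_smul_sub_one_sub_isLittleO {𝔸 : Type*} [NormedRing 𝔸] [NormedAlgebra ℝ 𝔸]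
    [CompleteSpace 𝔸] (a : 𝔸) :
    (fun t : ℝ => exp (t • a) - 1 - t • a) =o[𝓝 0] fun t => t := by
  have h := hasDerivAt_iff_isLittleO_nhds_zero.mp (hasDerivAt_exp_smul_const (𝕂 := ℝ) a 0)
  simpa only [zero_add, zero_smul, exp_zero, one_mul] using h

namespace Matrix

variable {n : Type*} [Fintype n] [DecidableEq n]

theorem isUnit_det_exp (A : Matrix n n ℝ) : IsUnit (exp A).det := by
  have h : IsUnit (exp A) := isUnit_exp A
  exact (isUnit_iff_isUnit_det _).mp h

theorem det_exp_pos (A : Matrix n n ℝ) : 0 < (exp A).det := by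
  have hsq : exp A = exp ((2⁻¹ : ℝ) • A) ^ 2 := by
    rw [← exp_nsmul]
    congr 1
    rw [← Nat.cast_smul_eq_nsmul ℝ, smul_smul]
    norm_num
  rw [hsq, det_pow]
  exact sq_pos_of_ne_zero (isUnit_det_exp _).ne_zero

theorem transpose_exp_mul_exp {W : Matrix n n ℝ} (hW : Wᵀ = -W) : (exp W)ᵀ * exp W = 1 := by
  rw [← exp_transpose, hW, exp_neg]
  exact nonsing_inv_mul _ (isUnit_det_exp W)

end Matrix

theorem exp_mem_SO3 {W : M3} (hW : W.transpose = -W) : exp W ∈ SO3 := by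
  have horth := Matrix.transpose_exp_mul_exp hW
  have hdet_sq : (exp W).det * (exp W).det = 1 := by
    simpa [Matrix.det_mul, Matrix.det_transpose] using congrArg Matrix.det horth
  exact ⟨horth, (mul_self_eq_one_iff.mp hdet_sq).resolve_right
    (by linarith [Matrix.det_exp_pos W])⟩

theorem one_mem_SO3 : (1 : M3) ∈ SO3 := ⟨by simp, by simp⟩

theorem symPart_add (X Y : M3) : symPart (X + Y) = symPart X + symPart Y := by
  simp only [symPart, Matrix.transpose_add]
  module

theorem symPart_smul (c : ℝ) (X : M3) : symPart (c • X) = c • symPart X := by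
  simp only [symPart, Matrix.transpose_smul]
  module

theorem norm_symPart_le (X : M3) : ‖symPart X‖ ≤ ‖X‖ := by
  have h := norm_add_le X X.transpose
  rw [Matrix.frobenius_norm_transpose] at h
  rw [symPart, norm_smul]
  norm_num
  linarith

def skewPart (F : M3) : M3 := F - symPart F

theorem transpose_skewPart (F : M3) : (skewPart F).transpose = -skewPart F := by
  simp only [skewPart, symPart, Matrix.transpose_sub, Matrix.transpose_smul, Matrix.transpose_add,
    Matrix.transpose_transpose]
  module

theorem skewPart_smul (c : ℝ) (F : M3) : skewPart (c • F) = c • skewPart F := by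
  rw [skewPart, skewPart, symPart_smul, smul_sub]

theorem symPart_one_sub {R : M3} (hR : R.transpose * R = 1) :
    symPart (1 - R) = (2⁻¹ : ℝ) • ((1 - R).transpose * (1 - R)) := by
  have hexpand : (1 - R).transpose * (1 - R) = 1 - R - R.transpose + R.transpose * R := by
    simp only [Matrix.transpose_sub, Matrix.transpose_one, Matrix.sub_mul, Matrix.mul_sub,
      Matrix.one_mul, Matrix.mul_one]
    abel
  rw [hexpand, hR, symPart, Matrix.transpose_sub, Matrix.transpose_one]
  congr 1
  abel

theorem norm_symPart_sub_le_dist (X : M3) {R : M3} (hR : R.transpose * R = 1) :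
    ‖symPart X‖ - 2 * ‖X‖ ^ 2 ≤ dist (1 + X) R := by
  set A : M3 := 1 - R with hA
  have hdist : dist (1 + X) R = ‖X + A‖ := by
    rw [dist_eq_norm, hA]
    congr 1
    abel
  rw [hdist]
  by_cases hsmall : ‖A‖ ≤ 2 * ‖X‖
  · have hquad : ‖(2⁻¹ : ℝ) • (A.transpose * A)‖ ≤ 2⁻¹ * ‖A‖ ^ 2 := by
      have hmul := Matrix.frobenius_norm_mul A.transpose A
      rw [Matrix.frobenius_norm_transpose] at hmul
      rw [norm_smul, sq]
      norm_num [hmul]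
    have hsym : symPart X = symPart (X + A) - (2⁻¹ : ℝ) • (A.transpose * A) := by
      rw [symPart_add, symPart_one_sub hR, add_sub_cancel_right]
    calc ‖symPart X‖ - 2 * ‖X‖ ^ 2
        ≤ ‖symPart (X + A)‖ + 2⁻¹ * ‖A‖ ^ 2 - 2 * ‖X‖ ^ 2 := by
          rw [hsym]
          linarith [norm_sub_le (symPart (X + A)) ((2⁻¹ : ℝ) • (A.transpose * A))]
      _ ≤ ‖X + A‖ := by
          nlinarith [norm_symPart_le (X + A), norm_nonneg A]
  · calc ‖symPart X‖ - 2 * ‖X‖ ^ 2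
        ≤ ‖A‖ - ‖-X‖ := by
          rw [norm_neg]
          nlinarith [norm_symPart_le X, sq_nonneg ‖X‖]
      _ ≤ ‖X + A‖ := by
          simpa only [sub_neg_eq_add, add_comm A] using norm_sub_norm_le A (-X)

theorem norm_symPart_sub_le_infDist (X : M3) :
    ‖symPart X‖ - 2 * ‖X‖ ^ 2 ≤ infDist (1 + X) SO3 :=
  (le_infDist ⟨1, one_mem_SO3⟩).mpr fun _ hR => norm_symPart_sub_le_dist X hR.1

theorem infDist_le_norm_symPart_add (X : M3) :
    infDist (1 + X) SO3 ≤ ‖symPart X‖ + ‖exp (skewPart X) - 1 - skewPart X‖ := by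
  have hsplit : 1 + X - exp (skewPart X) = symPart X - (exp (skewPart X) - 1 - skewPart X) := by
    rw [skewPart]
    abel
  calc infDist (1 + X) SO3 ≤ dist (1 + X) (exp (skewPart X)) :=
        infDist_le_dist_of_mem (exp_mem_SO3 (transpose_skewPart X))
    _ ≤ ‖symPart X‖ + ‖exp (skewPart X) - 1 - skewPart X‖ := by
        rw [dist_eq_norm, hsplit]
        exact norm_sub_le _ _

section FrobeniusNormedRing

attribute [local instance] Matrix.frobeniusNormedRing Matrix.frobeniusNormedAlgebra

theorem tendsto_inv_mul_norm_exp_smul_sub_one_sub (W : M3) :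
    Tendsto (fun t : ℝ => t⁻¹ * ‖exp (t • W) - 1 - t • W‖) (𝓝[>] 0) (𝓝 0) := by
  have h := (exp_smul_sub_one_sub_isLittleO W).norm_left.tendsto_div_nhds_zero
  simp only [div_eq_inv_mul] at h
  exact tendsto_nhdsWithin_of_tendsto_nhds h

end FrobeniusNormedRing

theorem statement7 (F' : M3) :
    Filter.Tendsto (fun t : ℝ => t⁻¹ * Metric.infDist (1 + t • F') SO3)
      (nhdsWithin 0 (Set.Ioi 0)) (nhds ‖symPart F'‖) := by
  set W := skewPart F'
  have hlower : Tendsto (fun t : ℝ => ‖symPart F'‖ - 2 * t * ‖F'‖ ^ 2) (𝓝[>] 0)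
      (𝓝 ‖symPart F'‖) := by
    refine tendsto_nhdsWithin_of_tendsto_nhds ?_
    simpa using (show Continuous fun t : ℝ => ‖symPart F'‖ - 2 * t * ‖F'‖ ^ 2 by fun_prop).tendsto 0
  have hupper : Tendsto (fun t : ℝ => ‖symPart F'‖ + t⁻¹ * ‖exp (t • W) - 1 - t • W‖) (𝓝[>] 0)
      (𝓝 ‖symPart F'‖) := by
    simpa using (tendsto_inv_mul_norm_exp_smul_sub_one_sub W).const_add ‖symPart F'‖
  refine tendsto_of_tendsto_of_tendsto_of_le_of_le' hlower hupper ?_ ?_ <;>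
    filter_upwards [self_mem_nhdsWithin] with t (ht : 0 < t)
  · rw [le_inv_mul_iff₀ ht]
    have := norm_symPart_sub_le_infDist (t • F')
    rw [symPart_smul, norm_smul, norm_smul, Real.norm_of_nonneg ht.le] at this
    linarith
  · rw [inv_mul_le_iff₀ ht, mul_add, mul_inv_cancel_left₀ ht.ne']
    simpa [symPart_smul, skewPart_smul, norm_smul, abs_of_pos ht] using
      infDist_le_norm_symPart_add (t • F')
end
end
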